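/- Let ε ∈ (0,1/4], ε₀ := (1−√(1−4ε))/2, p ∈ Δ(K), x a mixed action, and x' := c_{ε₀}(x,p). Then for every k ∈ K and i ∈ I one has p^{x'}(k|i) ≥ ε·p(k); in particular x' is ε-ambiguous at p, i.e. p^{x'}(k|i) ≥ ε·min_{k'∈K} p(k') for all k, i. -/

import Mathlib

open Finset

noncomputable section
open Classical

/-- `p` is an element of the probability simplex Δ(K). -/
def pSimplex {K : Type*} [Fintype K] (p : K → ℝ) : Prop :=
  (∀ k, 0 ≤ p k) ∧ ∑ k, p k = 1

/-- `x : K → Δ(I)` is a mixed action, written `x k i = x(i|k)`. -/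
def MixedAction {K I : Type*} [Fintype K] [Fintype I] (x : K → I → ℝ) : Prop :=
  (∀ k i, 0 ≤ x k i) ∧ ∀ k, ∑ i, x k i = 1

/-- Marginal `x̄^p(i) = ∑_k p(k)·x(i|k)`. -/
def bar {K I : Type*} [Fintype K] (p : K → ℝ) (x : K → I → ℝ) (i : I) : ℝ :=
  ∑ k, p k * x k i

/-- Posterior `p^x(k|i)`. -/
def post {K I : Type*} [Fintype K] (p : K → ℝ) (x : K → I → ℝ) (i : I) (k : K) : ℝ :=
  if bar p x i ≠ 0 then x k i * p k / bar p x i else p k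

/-- The set `NR[x,ε,p]` of (x,ε)-non-revealing actions at p. -/
def NRset {K I : Type*} [Fintype K] [Fintype I] (x : K → I → ℝ) (ε : ℝ) (p : K → ℝ) :
    Finset I :=
  Finset.univ.filter fun i =>
    bar p x i ≠ 0 ∧ ∀ k, (1 - ε) * bar p x i ≤ x k i ∧ x k i ≤ (1 + ε) * bar p x i

/-- The set `R[x,ε,p]` of (x,ε)-revealing actions at p. -/
def Rset {K I : Type*} [Fintype K] [Fintype I] (x : K → I → ℝ) (ε : ℝ) (p : K → ℝ) :
    Finset I :=
  (Finset.univ.filter fun i => bar p x i ≠ 0) \ NRset x ε p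

/-- `x(A|k) = ∑_{i∈A} x(i|k)`. -/
def xOn {K I : Type*} (x : K → I → ℝ) (A : Finset I) (k : K) : ℝ := ∑ i ∈ A, x k i

/-- `x̄^p(A) = ∑_{i∈A} x̄^p(i)`. -/
def barOn {K I : Type*} [Fintype K] (p : K → ℝ) (x : K → I → ℝ) (A : Finset I) : ℝ :=
  ∑ i ∈ A, bar p x i

/-- The ε-silent mapping `c_ε(x,p)`. -/
def silent {K I : Type*} [Fintype K] [Fintype I] (ε : ℝ) (x : K → I → ℝ) (p : K → ℝ) :
    K → I → ℝ :=
  fun k i =>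
    if i ∈ NRset x ε p then
      ((1 - ε) * xOn x (NRset x ε p) k / barOn p x (NRset x ε p) + ε) * bar p x i
    else (1 - ε) * x k i + ε * bar p x i

/-!
The silent mapping `c_δ(x,p)` leaves the marginal `x̄^p` unchanged (for actions outside
`NR[x,δ,p]` it mixes each `x(·|k)` with the marginal, on `NR[x,δ,p]` it redistributes
the common mass `x(NR|k)` proportionally to the marginal), and every conditional
probability `c_δ(x,p)(i|k)` is at least `δ·x̄^p(i)`. Bayes' rule then gives
`p^{c_δ(x,p)}(k|i) ≥ δ·p(k)`, and `ε ≤ ε₀` because `√(1-4ε) ≤ 1-2ε`.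
-/

section Silent

variable {K I : Type*} [Fintype K]

theorem bar_nonneg {p : K → ℝ} {x : K → I → ℝ} (hp : ∀ k, 0 ≤ p k)
    (hx : ∀ k i, 0 ≤ x k i) (i : I) : 0 ≤ bar p x i :=
  Finset.sum_nonneg fun k _ => mul_nonneg (hp k) (hx k i)

theorem barOn_eq_sum_mul_xOn (p : K → ℝ) (x : K → I → ℝ) (A : Finset I) :
    barOn p x A = ∑ k, p k * xOn x A k := by
  simp only [barOn, bar, xOn, Finset.mul_sum]
  exact Finset.sum_comm

theorem mul_le_post {p : K → ℝ} {y : K → I → ℝ} {δ : ℝ} {i : I} {k : K} (hδ : δ ≤ 1)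
    (hpk : 0 ≤ p k) (hbar : 0 ≤ bar p y i) (h : δ * bar p y i ≤ y k i) :
    δ * p k ≤ post p y i k := by
  unfold post
  split_ifs with hb
  · rw [le_div_iff₀ (lt_of_le_of_ne hbar (Ne.symm hb))]
    calc δ * p k * bar p y i = δ * bar p y i * p k := by ring
      _ ≤ y k i * p k := mul_le_mul_of_nonneg_right h hpk
  · exact mul_le_of_le_one_left hpk hδ

variable [Fintype I] {p : K → ℝ} {x : K → I → ℝ} {δ : ℝ}

theorem barOn_NRset_pos (hp : ∀ k, 0 ≤ p k) (hx : ∀ k i, 0 ≤ x k i) {i : I}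
    (hi : i ∈ NRset x δ p) : 0 < barOn p x (NRset x δ p) :=
  have hbar : bar p x i ≠ 0 := (Finset.mem_filter.mp hi).2.1
  (lt_of_le_of_ne (bar_nonneg hp hx i) hbar.symm).trans_le
    (Finset.single_le_sum (fun j _ => bar_nonneg hp hx j) hi)

theorem silent_of_mem {i : I} (hi : i ∈ NRset x δ p) (k : K) :
    silent δ x p k i =
      ((1 - δ) * xOn x (NRset x δ p) k / barOn p x (NRset x δ p) + δ) * bar p x i :=
  if_pos hi

theorem silent_of_not_mem {i : I} (hi : i ∉ NRset x δ p) (k : K) :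
    silent δ x p k i = (1 - δ) * x k i + δ * bar p x i :=
  if_neg hi

theorem bar_silent (hp : pSimplex p) (hx : ∀ k i, 0 ≤ x k i) (i : I) :
    bar p (silent δ x p) i = bar p x i := by
  by_cases hi : i ∈ NRset x δ p
  · have hB := (barOn_NRset_pos hp.1 hx hi).ne'
    calc bar p (silent δ x p) i
        = ∑ k, ((1 - δ) / barOn p x (NRset x δ p) * bar p x i * (p k * xOn x (NRset x δ p) k)
            + δ * bar p x i * p k) :=
          Finset.sum_congr rfl fun k _ => by rw [silent_of_mem hi]; ring
      _ = (1 - δ) / barOn p x (NRset x δ p) * bar p x i * barOn p x (NRset x δ p)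
            + δ * bar p x i * ∑ k, p k := by
          rw [Finset.sum_add_distrib, ← Finset.mul_sum, ← Finset.mul_sum,
            barOn_eq_sum_mul_xOn]
      _ = bar p x i := by
          rw [hp.2]
          field_simp
          ring
  · calc bar p (silent δ x p) i
        = ∑ k, ((1 - δ) * (p k * x k i) + δ * bar p x i * p k) :=
          Finset.sum_congr rfl fun k _ => by rw [silent_of_not_mem hi]; ring
      _ = (1 - δ) * bar p x i + δ * bar p x i * ∑ k, p k := by
          rw [Finset.sum_add_distrib, ← Finset.mul_sum, ← Finset.mul_sum, bar]
      _ = bar p x i := by rw [hp.2]; ring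

theorem mul_bar_le_silent (hδ : δ ≤ 1) (hp : ∀ k, 0 ≤ p k) (hx : ∀ k i, 0 ≤ x k i)
    (k : K) (i : I) : δ * bar p x i ≤ silent δ x p k i := by
  by_cases hi : i ∈ NRset x δ p
  · rw [silent_of_mem hi]
    have hshift : 0 ≤ (1 - δ) * xOn x (NRset x δ p) k / barOn p x (NRset x δ p) :=
      div_nonneg (mul_nonneg (sub_nonneg.2 hδ) (Finset.sum_nonneg fun j _ => hx k j))
        (barOn_NRset_pos hp hx hi).le
    nlinarith [mul_nonneg hshift (bar_nonneg hp hx i)]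
  · rw [silent_of_not_mem hi]
    linarith [mul_nonneg (sub_nonneg.2 hδ) (hx k i)]

theorem mul_le_post_silent (hδ : δ ≤ 1) (hp : pSimplex p) (hx : ∀ k i, 0 ≤ x k i)
    (k : K) (i : I) : δ * p k ≤ post p (silent δ x p) i k := by
  apply mul_le_post hδ (hp.1 k) <;> rw [bar_silent hp hx i]
  · exact bar_nonneg hp.1 hx i
  · exact mul_bar_le_silent hδ hp.1 hx k i

end Silent

theorem le_one_sub_sqrt_one_sub_four_mul_div_two {ε : ℝ} (hε : ε ≤ 1 / 2) :
    ε ≤ (1 - Real.sqrt (1 - 4 * ε)) / 2 := by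
  have : Real.sqrt (1 - 4 * ε) ≤ 1 - 2 * ε := Real.sqrt_le_iff.2 ⟨by linarith, by nlinarith [sq_nonneg ε]⟩
  linarith

theorem silent_is_ambiguous_general {K I : Type*} [Fintype K] [Fintype I] [Nonempty K]
    (ε : ℝ) (hε0 : 0 < ε) (hε1 : ε ≤ 1/4)
    (p : K → ℝ) (hp : pSimplex p)
    (x : K → I → ℝ) (hx : MixedAction x) :
    (∀ (k : K) (i : I),
        ε * p k ≤ post p (silent ((1 - Real.sqrt (1 - 4*ε))/2) x p) i k) ∧
      ∀ (k : K) (i : I),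
        ε * Finset.univ.inf' Finset.univ_nonempty p ≤
          post p (silent ((1 - Real.sqrt (1 - 4*ε))/2) x p) i k := by
  have hεε₀ : ε ≤ (1 - Real.sqrt (1 - 4*ε))/2 :=
    le_one_sub_sqrt_one_sub_four_mul_div_two (by linarith)
  have hε₀ : (1 - Real.sqrt (1 - 4*ε))/2 ≤ 1 := by linarith [Real.sqrt_nonneg (1 - 4*ε)]
  have hpost : ∀ (k : K) (i : I),
      ε * p k ≤ post p (silent ((1 - Real.sqrt (1 - 4*ε))/2) x p) i k := fun k i =>
    (mul_le_mul_of_nonneg_right hεε₀ (hp.1 k)).trans (mul_le_post_silent hε₀ hp hx.1 k i)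
  refine ⟨hpost, fun k i => le_trans ?_ (hpost k i)⟩
  exact mul_le_mul_of_nonneg_left (Finset.inf'_le p (Finset.mem_univ k)) hε0.le

/-- x' = c_{ε₀}(x,p) satisfies p^{x'}(k|i) ≥ ε·p(k) for all k,i;
in particular x' is ε-ambiguous at p. -/
theorem silent_is_ambiguous {K I : Type*} [Fintype K] [Fintype I] [Nonempty K] [Nonempty I]
    (ε : ℝ) (hε0 : 0 < ε) (hε1 : ε ≤ 1/4)
    (p : K → ℝ) (hp : pSimplex p)
    (x : K → I → ℝ) (hx : MixedAction x) :
    (∀ (k : K) (i : I),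
        ε * p k ≤ post p (silent ((1 - Real.sqrt (1 - 4*ε))/2) x p) i k) ∧
      ∀ (k : K) (i : I),
        ε * Finset.univ.inf' Finset.univ_nonempty p ≤
          post p (silent ((1 - Real.sqrt (1 - 4*ε))/2) x p) i k :=
  silent_is_ambiguous_general ε hε0 hε1 p hp x hx
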